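/- With the operators $\ell_1,\dots,\ell_5$ of the λ-representation ($\ell_1 = \tfrac{i}{\hbar}q_1$, $\ell_2 = -\tfrac{i}{\hbar}q_2$, $\ell_3 = q_1\partial_{q_2}$, $\ell_4 = q_1\partial_{q_1} - q_2\partial_{q_2}$, $\ell_5 = q_2\partial_{q_1} + \tfrac{i}{\hbar}\tfrac{j}{q_1^2}$), the Casimir element evaluates to the scalar $j$: writing $K(X) = X_5\cdot X_1 \cdot X_1 + X_1\cdot X_2\cdot X_4 - X_2 \cdot X_2 \cdot X_3$ with symmetrized products $X\cdot Y = \tfrac12(XY+YX)$, one has $K(-i\hbar\ell)\,\varphi = j\,\varphi$ for every smooth function $\varphi$ of $(q_1,q_2)$ with $q_1\neq0$. -/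

import Mathlib

open Complex

/-- Partial derivative `∂/∂qᵢ` of a complex-valued function on `ℝ²`. -/
noncomputable def pd2 (i : Fin 2) (φ : (Fin 2 → ℝ) → ℂ) (x : Fin 2 → ℝ) : ℂ :=
  fderiv ℝ φ x (Pi.single i 1)

/-- The operators `ℓ₁,…,ℓ₅` of the λ-representation (indices shifted to `0,…,4`):
`ℓ₁ = (i/ℏ)q₁`, `ℓ₂ = -(i/ℏ)q₂`, `ℓ₃ = q₁∂_{q₂}`, `ℓ₄ = q₁∂_{q₁} - q₂∂_{q₂}`,
`ℓ₅ = q₂∂_{q₁} + (i/ℏ)(j/q₁²)`. -/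
noncomputable def Lop (ℏ j : ℝ) : Fin 5 → ((Fin 2 → ℝ) → ℂ) → (Fin 2 → ℝ) → ℂ
  | 0 => fun φ x => (Complex.I / ℏ) * (x 0 : ℂ) * φ x
  | 1 => fun φ x => -((Complex.I / ℏ) * (x 1 : ℂ)) * φ x
  | 2 => fun φ x => (x 0 : ℂ) * pd2 1 φ x
  | 3 => fun φ x => (x 0 : ℂ) * pd2 0 φ x - (x 1 : ℂ) * pd2 1 φ x
  | 4 => fun φ x => (x 1 : ℂ) * pd2 0 φ x + (Complex.I / ℏ) * ((j : ℂ) / (x 0 : ℂ)^2) * φ x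

/-- The operators `X_A = -iℏ ℓ_A`. -/
noncomputable def NOp (ℏ j : ℝ) (A : Fin 5) (φ : (Fin 2 → ℝ) → ℂ)
    (x : Fin 2 → ℝ) : ℂ :=
  (-Complex.I * (ℏ : ℂ)) * Lop ℏ j A φ x

/-- Symmetrized product of two operators: `X·Y = ½(XY + YX)`. -/
noncomputable def sOp (X Y : ((Fin 2 → ℝ) → ℂ) → (Fin 2 → ℝ) → ℂ)
    (φ : (Fin 2 → ℝ) → ℂ) (x : Fin 2 → ℝ) : ℂ :=
  (X (Y φ) x + Y (X φ) x) / 2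

lemma pd2_mul {f g : (Fin 2 → ℝ) → ℂ} {x : Fin 2 → ℝ}
    (hf : DifferentiableAt ℝ f x) (hg : DifferentiableAt ℝ g x) (i : Fin 2) :
    pd2 i (fun y => f y * g y) x = pd2 i f x * g x + f x * pd2 i g x := by
  unfold pd2
  rw [fderiv_fun_mul hf hg]
  simp [smul_eq_mul]
  ring

lemma pd2_neg {f : (Fin 2 → ℝ) → ℂ} {x : Fin 2 → ℝ} (i : Fin 2) :
    pd2 i (fun y => -(f y)) x = -pd2 i f x := by
  unfold pd2
  rw [fderiv_fun_neg]
  simp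

lemma hasFDerivAt_coord (k : Fin 2) (x : Fin 2 → ℝ) :
    HasFDerivAt (fun y : Fin 2 → ℝ => ((y k : ℝ) : ℂ))
      (Complex.ofRealCLM.comp (ContinuousLinearMap.proj k)) x :=
  Complex.ofRealCLM.hasFDerivAt.comp x
    ((ContinuousLinearMap.proj k : (Fin 2 → ℝ) →L[ℝ] ℝ).hasFDerivAt)

lemma diff_coord (k : Fin 2) (x : Fin 2 → ℝ) :
    DifferentiableAt ℝ (fun y : Fin 2 → ℝ => ((y k : ℝ) : ℂ)) x :=
  (hasFDerivAt_coord k x).differentiableAt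

lemma pd2_coord (k i : Fin 2) (x : Fin 2 → ℝ) :
    pd2 i (fun y : Fin 2 → ℝ => ((y k : ℝ) : ℂ)) x = if k = i then 1 else 0 := by
  unfold pd2
  rw [(hasFDerivAt_coord k x).fderiv]
  simp [Pi.single_apply]
  split <;> simp

set_option maxHeartbeats 2000000 in

/-- in the λ-representation, the symmetrized Casimir element
`K(X) = X₅·X₁·X₁ + X₁·X₂·X₄ - X₂·X₂·X₃` (with `X·Y = ½(XY+YX)`) evaluated on
`X_A = -iℏ ℓ_A` acts as multiplication by the constant `j`:
`K(-iℏℓ) φ = j φ` for every smooth `φ` on `{q : q₁ ≠ 0}`. -/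
theorem casimir_lambda_representation (ℏ j : ℝ) (hℏ : ℏ ≠ 0)
    (φ : (Fin 2 → ℝ) → ℂ)
    (hφ : ContDiffOn ℝ (⊤ : ℕ∞) φ {x : Fin 2 → ℝ | x 0 ≠ 0}) :
    ∀ x : Fin 2 → ℝ, x 0 ≠ 0 →
      sOp (sOp (NOp ℏ j 4) (NOp ℏ j 0)) (NOp ℏ j 0) φ x
        + sOp (sOp (NOp ℏ j 0) (NOp ℏ j 1)) (NOp ℏ j 3) φ x
        - sOp (sOp (NOp ℏ j 1) (NOp ℏ j 1)) (NOp ℏ j 2) φ x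
      = (j : ℂ) * φ x := by
  have hℏ' : (ℏ : ℂ) ≠ 0 := Complex.ofReal_ne_zero.mpr hℏ
  have key : (-Complex.I * (ℏ : ℂ)) * (Complex.I / (ℏ : ℂ)) = 1 := by
    have : (-Complex.I * (ℏ : ℂ)) * (Complex.I / (ℏ : ℂ))
        = -(Complex.I * Complex.I) * ((ℏ : ℂ) / (ℏ : ℂ)) := by ring
    rw [this, Complex.I_mul_I, div_self hℏ']
    ring
  have hN0 : ∀ ψ : (Fin 2 → ℝ) → ℂ, NOp ℏ j 0 ψ = fun y => (y 0 : ℂ) * ψ y := by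
    intro ψ; funext y
    show (-Complex.I * ℏ) * ((Complex.I / ℏ) * (y 0 : ℂ) * ψ y) = _
    rw [show (-Complex.I * (ℏ:ℂ)) * ((Complex.I / ℏ) * (y 0 : ℂ) * ψ y)
        = ((-Complex.I * (ℏ:ℂ)) * (Complex.I / (ℏ:ℂ))) * ((y 0 : ℂ) * ψ y) from by ring,
      key, one_mul]
  have hN1 : ∀ ψ : (Fin 2 → ℝ) → ℂ, NOp ℏ j 1 ψ = fun y => -((y 1 : ℂ) * ψ y) := by
    intro ψ; funext y
    show (-Complex.I * ℏ) * (-((Complex.I / ℏ) * (y 1 : ℂ)) * ψ y) = _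
    rw [show (-Complex.I * (ℏ:ℂ)) * (-((Complex.I / ℏ) * (y 1 : ℂ)) * ψ y)
        = -(((-Complex.I * (ℏ:ℂ)) * (Complex.I / (ℏ:ℂ))) * ((y 1 : ℂ) * ψ y)) from by ring,
      key, one_mul]
  have hN4 : ∀ ψ : (Fin 2 → ℝ) → ℂ, NOp ℏ j 4 ψ =
      fun y => (-Complex.I * ℏ) * ((y 1 : ℂ) * pd2 0 ψ y) + (j : ℂ)/(y 0 : ℂ)^2 * ψ y := by
    intro ψ; funext y
    show (-Complex.I * ℏ) * ((y 1 : ℂ) * pd2 0 ψ y + (Complex.I / ℏ) * ((j : ℂ)/(y 0 : ℂ)^2) * ψ y) = _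
    rw [show (-Complex.I * (ℏ:ℂ)) * ((y 1 : ℂ) * pd2 0 ψ y + (Complex.I / ℏ) * ((j : ℂ)/(y 0 : ℂ)^2) * ψ y)
        = (-Complex.I * (ℏ:ℂ)) * ((y 1 : ℂ) * pd2 0 ψ y)
          + ((-Complex.I * (ℏ:ℂ)) * (Complex.I / (ℏ:ℂ))) * ((j : ℂ)/(y 0 : ℂ)^2 * ψ y) from by ring,
      key, one_mul]
  have hN2 : ∀ ψ : (Fin 2 → ℝ) → ℂ, NOp ℏ j 2 ψ =
      fun y => (-Complex.I * ℏ) * ((y 0 : ℂ) * pd2 1 ψ y) := fun ψ => rfl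
  have hN3 : ∀ ψ : (Fin 2 → ℝ) → ℂ, NOp ℏ j 3 ψ =
      fun y => (-Complex.I * ℏ) * ((y 0 : ℂ) * pd2 0 ψ y - (y 1 : ℂ) * pd2 1 ψ y) := fun ψ => rfl
  intro x hx
  have hx' : ((x 0 : ℝ) : ℂ) ≠ 0 := Complex.ofReal_ne_zero.mpr hx
  -- differentiability of φ at x
  have hopen : IsOpen {y : Fin 2 → ℝ | y 0 ≠ 0} :=
    isOpen_compl_singleton.preimage (continuous_apply 0)
  have hφd : DifferentiableAt ℝ φ x :=
    ((hφ x hx).contDiffAt (hopen.mem_nhds hx)).differentiableAt (by simp)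
  have hg1d : DifferentiableAt ℝ (fun y : Fin 2 → ℝ => ((y 0 : ℝ) : ℂ) * φ y) x :=
    (diff_coord 0 x).mul hφd
  have hg1d' : DifferentiableAt ℝ (fun y : Fin 2 → ℝ => ((y 1 : ℝ) : ℂ) * φ y) x :=
    (diff_coord 1 x).mul hφd
  -- rewrite inner symmetrized products as plain mult operators
  have e01 : sOp (NOp ℏ j 0) (NOp ℏ j 1) φ
      = fun y => -(((y 0 : ℝ) : ℂ) * (((y 1 : ℝ) : ℂ) * φ y)) := by
    funext y; simp only [sOp, hN0, hN1]; ring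
  have e11 : sOp (NOp ℏ j 1) (NOp ℏ j 1) φ
      = fun y => ((y 1 : ℝ) : ℂ) * (((y 1 : ℝ) : ℂ) * φ y) := by
    funext y; simp only [sOp, hN1]; ring
  -- pd2 computations
  have PB : pd2 0 (fun y : Fin 2 → ℝ => ((y 0 : ℝ) : ℂ) * φ y) x
      = φ x + ((x 0 : ℝ) : ℂ) * pd2 0 φ x := by
    rw [pd2_mul (diff_coord 0 x) hφd, pd2_coord]; norm_num
  have PC : pd2 0 (fun y : Fin 2 → ℝ => ((y 0 : ℝ) : ℂ) * (((y 0 : ℝ) : ℂ) * φ y)) x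
      = 2 * ((x 0 : ℝ) : ℂ) * φ x + ((x 0 : ℝ) : ℂ)^2 * pd2 0 φ x := by
    rw [pd2_mul (diff_coord 0 x) hg1d, pd2_coord, PB]; norm_num; ring
  have PD0 : pd2 0 (fun y : Fin 2 → ℝ => -(((y 0 : ℝ) : ℂ) * (((y 1 : ℝ) : ℂ) * φ y))) x
      = -(((x 1 : ℝ) : ℂ) * φ x + ((x 0 : ℝ) : ℂ) * ((x 1 : ℝ) : ℂ) * pd2 0 φ x) := by
    rw [pd2_neg, pd2_mul (diff_coord 0 x) hg1d', pd2_coord,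
      pd2_mul (diff_coord 1 x) hφd, pd2_coord]
    norm_num; ring
  have PD1 : pd2 1 (fun y : Fin 2 → ℝ => -(((y 0 : ℝ) : ℂ) * (((y 1 : ℝ) : ℂ) * φ y))) x
      = -(((x 0 : ℝ) : ℂ) * φ x + ((x 0 : ℝ) : ℂ) * ((x 1 : ℝ) : ℂ) * pd2 1 φ x) := by
    rw [pd2_neg, pd2_mul (diff_coord 0 x) hg1d', pd2_coord,
      pd2_mul (diff_coord 1 x) hφd, pd2_coord]
    norm_num; ring
  have PE : pd2 1 (fun y : Fin 2 → ℝ => ((y 1 : ℝ) : ℂ) * (((y 1 : ℝ) : ℂ) * φ y)) x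
      = 2 * ((x 1 : ℝ) : ℂ) * φ x + ((x 1 : ℝ) : ℂ)^2 * pd2 1 φ x := by
    rw [pd2_mul (diff_coord 1 x) hg1d', pd2_coord,
      pd2_mul (diff_coord 1 x) hφd, pd2_coord]
    norm_num; ring
  simp only [sOp, hN0, hN1, hN2, hN3, hN4]
  rw [e01, e11, PB, PC, PD0, PD1, PE]
  field_simp
  ring_nf
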